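/- The only Fibonacci number expressible as 5 times a nonzero perfect square is F_5 = 5; that is, if F_n = 5x^2 for natural numbers n and x with x ≥ 1, then n = 5 and x = 1. -/

import Mathlib

/-!
Cohn's descent with Lucas numbers `L n = F (n - 1) + F (n + 1)`, both sequences indexed by `ℤ`.
From Binet's formula, `F (m + 2k) + (-1)^k F m = F (m + k) L k`, so for even `k` and odd
`t`, `F (r + 2kt) ≡ -F r [ZMOD L k]`, and likewise for `L`. If moreover `3 ∤ k` then
`L k ≡ 3 [ZMOD 4]`, so `L k` has a prime factor `p ≡ 3 [MOD 4]` and cannot divide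
`c (x² + y²)` with `c`, `y` prime to it. Writing `n - r = 2k·3^b`:
* for odd `n ≠ 5` take `r = ±5`: then `L k ∣ F n + F r = 5 (x² + 1)`, impossible;
* for `n = 2m`, `F m L m = 5x²` with `gcd (F m, L m) ∣ 2`. If `3 ∤ m` then `F m = 5a²` and
  induction on `n` gives `m = 5`, but `F 10 = 55`. If `3 ∣ m` then `L m = 2b²`; taking `r = 0` or
  `r = ±6` (where `L r = 2, 18`), and reducing `L² - 5F² = -4` mod 5 for odd `m`, this forces
  `m ∈ {0, 6}`, and `F 12 = 144`.
-/

def lucas (n : ℤ) : ℤ := Int.fib (n - 1) + Int.fib (n + 1)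

section Binet

open Real goldenRatio

theorem coe_lucas_eq (n : ℤ) : (lucas n : ℝ) = φ ^ n + ψ ^ n := by
  have hne : φ - ψ ≠ 0 := by rw [goldenRatio_sub_goldenConj]; positivity
  rw [lucas, Int.cast_add, coe_intFib_eq, coe_intFib_eq, zpow_sub₀ goldenRatio_ne_zero,
    zpow_sub₀ goldenConj_ne_zero, zpow_add₀ goldenRatio_ne_zero, zpow_add₀ goldenConj_ne_zero,
    zpow_one, zpow_one, div_eq_mul_inv _ φ, div_eq_mul_inv _ ψ, inv_goldenRatio, inv_goldenConj,
    ← goldenRatio_sub_goldenConj, ← add_div, div_eq_iff hne]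
  ring

theorem zpow_combination_add_two_mul {K : Type*} [Field K] {x y : K} (hx : x ≠ 0) (hy : y ≠ 0)
    (A B : K) (m : ℤ) (k : ℕ) :
    (A * x ^ (m + 2 * k) + B * y ^ (m + 2 * k)) + (x * y) ^ k * (A * x ^ m + B * y ^ m)
      = (A * x ^ (m + k) + B * y ^ (m + k)) * (x ^ k + y ^ k) := by
  simp only [zpow_add₀ hx, zpow_add₀ hy, zpow_mul, zpow_natCast, zpow_ofNat]
  ring

theorem fib_add_two_mul_add_neg_one_pow_mul (m : ℤ) (k : ℕ) :
    Int.fib (m + 2 * k) + (-1) ^ k * Int.fib m = Int.fib (m + k) * lucas k := by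
  have := zpow_combination_add_two_mul goldenRatio_ne_zero goldenConj_ne_zero
    (√5)⁻¹ (-(√5)⁻¹) m k
  rw [goldenRatio_mul_goldenConj] at this
  apply Int.cast_injective (α := ℝ)
  push_cast
  rw [coe_intFib_eq, coe_intFib_eq, coe_intFib_eq, coe_lucas_eq, zpow_natCast, zpow_natCast]
  linear_combination this

theorem lucas_add_two_mul_add_neg_one_pow_mul (m : ℤ) (k : ℕ) :
    lucas (m + 2 * k) + (-1) ^ k * lucas m = lucas (m + k) * lucas k := by
  have := zpow_combination_add_two_mul goldenRatio_ne_zero goldenConj_ne_zero 1 1 m k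
  rw [goldenRatio_mul_goldenConj] at this
  apply Int.cast_injective (α := ℝ)
  push_cast
  rw [coe_lucas_eq, coe_lucas_eq, coe_lucas_eq, coe_lucas_eq, zpow_natCast, zpow_natCast]
  linear_combination this

theorem lucas_sq_sub_five_mul_fib_sq (k : ℕ) :
    lucas k ^ 2 - 5 * Int.fib k ^ 2 = 4 * (-1) ^ k := by
  have key : (φ ^ k + ψ ^ k) ^ 2 - (φ ^ k - ψ ^ k) ^ 2 = 4 * (φ * ψ) ^ k := by
    rw [mul_pow]; ring
  rw [goldenRatio_mul_goldenConj] at key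
  apply Int.cast_injective (α := ℝ)
  push_cast
  rw [coe_intFib_eq, coe_lucas_eq, zpow_natCast, zpow_natCast, div_pow (φ ^ k - ψ ^ k),
    Real.sq_sqrt (by norm_num)]
  linear_combination key

end Binet

theorem lucas_eq_two_mul_fib_add_one_sub_fib (n : ℤ) :
    lucas n = 2 * Int.fib (n + 1) - Int.fib n := by
  have h := Int.fib_add_two (n - 1)
  rw [show n - 1 + 2 = n + 1 by ring, sub_add_cancel] at h
  rw [lucas, h]
  ring

theorem lucas_natCast_pos (k : ℕ) : 0 < lucas k := by
  have hle : Nat.fib k ≤ Nat.fib (k + 1) := Nat.fib_mono k.le_succ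
  have hpos : 0 < Nat.fib (k + 1) := Nat.fib_pos.2 k.succ_pos
  rw [lucas_eq_two_mul_fib_add_one_sub_fib, show (k : ℤ) + 1 = (k + 1 : ℕ) by push_cast; rfl,
    Int.fib_natCast, Int.fib_natCast]
  omega

theorem fib_two_mul_eq_fib_mul_lucas (n : ℤ) : Int.fib (2 * n) = Int.fib n * lucas n := by
  rw [Int.fib_two_mul, lucas_eq_two_mul_fib_add_one_sub_fib]

theorem lucas_dvd_fib_add_two_mul_add (m : ℤ) {k : ℕ} (hk : Even k) :
    lucas k ∣ Int.fib (m + 2 * k) + Int.fib m := by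
  have h := fib_add_two_mul_add_neg_one_pow_mul m k
  rw [hk.neg_one_pow, one_mul] at h
  exact ⟨Int.fib (m + k), by rw [h, mul_comm]⟩

theorem lucas_dvd_lucas_add_two_mul_add (m : ℤ) {k : ℕ} (hk : Even k) :
    lucas k ∣ lucas (m + 2 * k) + lucas m := by
  have h := lucas_add_two_mul_add_neg_one_pow_mul m k
  rw [hk.neg_one_pow, one_mul] at h
  exact ⟨lucas (m + k), by rw [h, mul_comm]⟩

theorem Int.modEq_pow_mul_of_forall_add_modEq {u : ℤ → ℤ} {c d s : ℤ}
    (h : ∀ m, u (m + c) ≡ s * u m [ZMOD d]) (m : ℤ) (t : ℕ) :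
    u (m + c * t) ≡ s ^ t * u m [ZMOD d] := by
  induction t with
  | zero => simp
  | succ t ih =>
    calc u (m + c * ↑(t + 1)) = u (m + c * t + c) := by push_cast; ring_nf
      _ ≡ s * u (m + c * t) [ZMOD d] := h _
      _ ≡ s * (s ^ t * u m) [ZMOD d] := ih.mul_left s
      _ = s ^ (t + 1) * u m := by ring

theorem lucas_add_six_modEq (m : ℤ) : lucas (m + 6) ≡ lucas m [ZMOD 4] := by
  have h := lucas_add_two_mul_add_neg_one_pow_mul m 3
  rw [show lucas ((3 : ℕ) : ℤ) = 4 by decide] at h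
  push_cast at h
  exact (Int.modEq_iff_dvd.2 ⟨lucas (m + 3), by linear_combination h⟩).symm

theorem lucas_add_four_modEq (m : ℤ) : lucas (m + 4) ≡ -1 * lucas m [ZMOD 3] := by
  have h := lucas_add_two_mul_add_neg_one_pow_mul m 2
  rw [show lucas ((2 : ℕ) : ℤ) = 3 by decide] at h
  push_cast at h
  exact (Int.modEq_iff_dvd.2 ⟨lucas (m + 2), by linear_combination h⟩).symm

theorem lucas_emod_four_eq_three {k : ℕ} (hk : Even k) (h3 : ¬ 3 ∣ k) : lucas k % 4 = 3 := by
  have h := Int.modEq_pow_mul_of_forall_add_modEq (u := lucas) (s := 1)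
    (fun m => by simpa using lucas_add_six_modEq m) (k % 6 : ℕ) (k / 6)
  rw [one_pow, one_mul, show ((k % 6 : ℕ) : ℤ) + 6 * (k / 6 : ℕ) = k by omega] at h
  rw [h]
  have : k % 6 = 2 ∨ k % 6 = 4 := by rcases hk with ⟨j, rfl⟩; omega
  rcases this with h6 | h6 <;> rw [h6] <;> decide

theorem lucas_not_three_dvd {k : ℕ} (hk : 4 ∣ k) : ¬ 3 ∣ lucas k := by
  have h := Int.modEq_pow_mul_of_forall_add_modEq lucas_add_four_modEq 0 (k / 4)
  rw [show (0 : ℤ) + 4 * (k / 4 : ℕ) = k by omega, show lucas 0 = 2 by decide] at h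
  rcases neg_one_pow_eq_or ℤ (k / 4) with hs | hs <;> rw [hs] at h <;>
    exact fun hd => by have := h.eq; omega

theorem lucas_not_five_dvd (k : ℕ) : ¬ 5 ∣ lucas k := by
  rintro ⟨c, hc⟩
  have h : (5 : ℤ) ∣ 4 * (-1) ^ k :=
    ⟨5 * c ^ 2 - Int.fib k ^ 2, by rw [← lucas_sq_sub_five_mul_fib_sq, hc]; ring⟩
  rcases neg_one_pow_eq_or ℤ k with hs | hs <;> rw [hs] at h <;> norm_num at h

theorem Nat.exists_prime_dvd_mod_four_eq_three {n : ℕ} (hn : n % 4 = 3) :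
    ∃ p, p.Prime ∧ p ∣ n ∧ p % 4 = 3 := by
  induction n using induction_on_primes with
  | zero => omega
  | one => omega
  | prime_mul p a hp ih =>
    by_cases hp3 : p % 4 = 3
    · exact ⟨p, hp, dvd_mul_right p a, hp3⟩
    have ha : a % 4 = 3 := by
      have := Nat.mul_mod p a 4
      have : p % 4 < 4 := Nat.mod_lt _ (by norm_num)
      have : a % 4 < 4 := Nat.mod_lt _ (by norm_num)
      interval_cases hp4 : p % 4 <;> interval_cases ha4 : a % 4 <;> omega
    obtain ⟨q, hq, hqa, hq3⟩ := ih ha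
    exact ⟨q, hq, dvd_mul_of_dvd_right hqa p, hq3⟩

theorem Int.not_dvd_mul_sq_add_sq {n : ℤ} (hn0 : 0 < n) (hn : n % 4 = 3) {c x y : ℤ}
    (hc : IsCoprime c n) (hy : IsCoprime y n) : ¬ n ∣ c * (x ^ 2 + y ^ 2) := by
  lift n to ℕ using hn0.le
  obtain ⟨p, hp, hpn, hp3⟩ := Nat.exists_prime_dvd_mod_four_eq_three (by omega : n % 4 = 3)
  have : Fact p.Prime := ⟨hp⟩
  have hpn' : (p : ℤ) ∣ n := Int.natCast_dvd_natCast.2 hpn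
  have hp' : Prime (p : ℤ) := Nat.prime_iff_prime_int.1 hp
  have not_dvd {z : ℤ} (hz : IsCoprime z n) : ¬ (p : ℤ) ∣ z :=
    fun hpz => hp'.not_isUnit (hz.isUnit_of_dvd' hpz hpn')
  intro hdvd
  have hsum : (p : ℤ) ∣ x ^ 2 + y ^ 2 :=
    (hp'.dvd_or_dvd (hpn'.trans hdvd)).resolve_left (not_dvd hc)
  have hy0 : (y : ZMod p) ≠ 0 := by
    rw [Ne, ZMod.intCast_zmod_eq_zero_iff_dvd]
    exact not_dvd hy
  have hsq : (x : ZMod p) ^ 2 = -(y : ZMod p) ^ 2 := by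
    rw [eq_neg_iff_add_eq_zero]
    exact_mod_cast (ZMod.intCast_zmod_eq_zero_iff_dvd _ p).2 hsum
  exact ZMod.mod_four_ne_three_of_sq_eq_neg_sq' hy0 hsq hp3

theorem Nat.exists_eq_two_mul_mul_three_pow {N j : ℕ} (hN : N ≠ 0) (h : 2 ^ (j + 1) ∣ N) :
    ∃ k b, N = 2 * k * 3 ^ b ∧ ¬ 3 ∣ k ∧ 2 ^ j ∣ k := by
  obtain ⟨b, M, hM3, rfl⟩ := Nat.exists_eq_pow_mul_and_not_dvd hN 3 (by norm_num)
  have hcop : Nat.Coprime (2 ^ (j + 1)) (3 ^ b) := Nat.Coprime.pow _ _ (by norm_num)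
  obtain ⟨q, rfl⟩ := hcop.dvd_of_dvd_mul_left h
  refine ⟨2 ^ j * q, b, by ring, fun h3 => hM3 ?_, dvd_mul_right _ _⟩
  rw [pow_succ, mul_comm _ 2, mul_assoc]
  exact dvd_mul_of_dvd_right h3 2

theorem Int.exists_eq_mul_sq_and_eq_sq {p : ℕ} (hp : p.Prime) {u v y : ℤ} (hu : 0 ≤ u)
    (hv : 0 ≤ v) (huv : IsCoprime u v) (hpv : ¬ (p : ℤ) ∣ v) (h : u * v = p * y ^ 2) :
    (∃ a, u = p * a ^ 2) ∧ ∃ b, v = b ^ 2 := by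
  have hp' : Prime (p : ℤ) := Nat.prime_iff_prime_int.1 hp
  have hp0 : (0 : ℤ) < p := by exact_mod_cast hp.pos
  have hcop : IsCoprime (p * u) v := ((hp'.coprime_iff_not_dvd).2 hpv).mul_left huv
  have hsq : p * u * v = (p * y) ^ 2 := by linear_combination p * h
  have sq_of_nonneg {w : ℤ} (hw : 0 ≤ w) (h : ∃ e, w = e ^ 2 ∨ w = -e ^ 2) :
      ∃ e, w = e ^ 2 := by
    obtain ⟨e, he | he⟩ := h
    · exact ⟨e, he⟩
    · exact ⟨e, by nlinarith [sq_nonneg e]⟩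
  obtain ⟨e, he⟩ := sq_of_nonneg (by positivity) (Int.sq_of_isCoprime hcop hsq)
  obtain ⟨b, hb⟩ := sq_of_nonneg hv (Int.sq_of_isCoprime hcop.symm
    (show v * (p * u) = (p * y) ^ 2 by linear_combination hsq))
  obtain ⟨a, rfl⟩ := hp'.dvd_of_dvd_pow (⟨u, he.symm⟩ : (p : ℤ) ∣ e ^ 2)
  refine ⟨⟨a, mul_left_cancel₀ hp0.ne' ?_⟩, b, hb⟩
  linear_combination he

theorem exists_lucas_dvd_add_of_two_pow_dvd_sub {u : ℤ → ℤ}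
    (hu : ∀ m {k : ℕ}, Even k → lucas k ∣ u (m + 2 * k) + u m) {r n : ℤ} {j : ℕ}
    (hrn : r < n) (h : 2 ^ (j + 2) ∣ n - r) :
    ∃ k : ℕ, ¬ 3 ∣ k ∧ 2 ^ (j + 1) ∣ k ∧ lucas k ∣ u n + u r := by
  obtain ⟨N, hN⟩ := Int.eq_ofNat_of_zero_le (sub_nonneg.2 hrn.le)
  rw [hN] at h
  obtain ⟨k, b, hNk, h3, h2⟩ :=
    Nat.exists_eq_two_mul_mul_three_pow (by omega) (Int.natCast_dvd_natCast.1 h)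
  have hk : Even k := even_iff_two_dvd.2 ((dvd_pow_self 2 (by omega)).trans h2)
  refine ⟨k, h3, h2, ?_⟩
  have hper (m : ℤ) : u (m + 2 * k) ≡ -1 * u m [ZMOD lucas k] := by
    refine Int.modEq_iff_dvd.2 ?_
    rw [show -1 * u m - u (m + 2 * k) = -(u (m + 2 * k) + u m) by ring, dvd_neg]
    exact hu m hk
  have hn : r + 2 * k * ((3 ^ b : ℕ) : ℤ) = n := by
    rw [← Nat.cast_ofNat, ← Nat.cast_mul, ← Nat.cast_mul, ← hNk]
    omega
  have hmod := Int.modEq_pow_mul_of_forall_add_modEq hper r (3 ^ b)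
  rw [Odd.neg_one_pow (Odd.pow (by decide)), hn] at hmod
  rw [← dvd_neg, show -(u n + u r) = -1 * u r - u n by ring]
  exact hmod.dvd

theorem lucas_not_dvd_mul_sq_add_sq {k : ℕ} (hk : Even k) (h3 : ¬ 3 ∣ k) {c x y : ℤ}
    (hc : IsCoprime c (lucas k)) (hy : IsCoprime y (lucas k)) :
    ¬ lucas k ∣ c * (x ^ 2 + y ^ 2) :=
  Int.not_dvd_mul_sq_add_sq (lucas_natCast_pos k) (lucas_emod_four_eq_three hk h3) hc hy

theorem two_isCoprime_lucas {k : ℕ} (hk : Even k) (h3 : ¬ 3 ∣ k) : IsCoprime 2 (lucas k) :=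
  Int.prime_two.coprime_iff_not_dvd.2 (by have := lucas_emod_four_eq_three hk h3; omega)

theorem lucas_ne_two_mul_sq_of_odd {m : ℕ} (hm : Odd m) (b : ℤ) : lucas m ≠ 2 * b ^ 2 := by
  intro h
  have hnorm := lucas_sq_sub_five_mul_fib_sq m
  rw [hm.neg_one_pow, h] at hnorm
  have h5 := congrArg (Int.cast : ℤ → ZMod 5) hnorm
  push_cast at h5
  generalize (b : ZMod 5) = B, (Int.fib m : ZMod 5) = F at h5
  revert B F
  decide

theorem eq_zero_or_eq_six_of_lucas_eq_two_mul_sq {m : ℕ} {b : ℤ} (h : lucas m = 2 * b ^ 2) :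
    m = 0 ∨ m = 6 := by
  by_contra hm
  push Not at hm
  have h4 : m % 4 = 0 ∨ m % 4 = 2 := by
    rcases Nat.even_or_odd m with ⟨j, rfl⟩ | hmo
    · omega
    · exact (lucas_ne_two_mul_sq_of_odd hmo b h).elim
  rcases h4 with h4 | h4
  · obtain ⟨k, h3, h2, hdvd⟩ := exists_lucas_dvd_add_of_two_pow_dvd_sub (u := lucas)
      lucas_dvd_lucas_add_two_mul_add (r := 0) (n := m) (j := 0) (by omega) (by norm_num; omega)
    have hk : Even k := even_iff_two_dvd.2 (by simpa using h2)
    rw [h, show lucas 0 = 2 by decide, show 2 * b ^ 2 + 2 = 2 * (b ^ 2 + 1 ^ 2) by ring] at hdvd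
    exact lucas_not_dvd_mul_sq_add_sq hk h3 (two_isCoprime_lucas hk h3) isCoprime_one_left hdvd
  · obtain ⟨r, hr, hrm, h8⟩ :
        ∃ r : ℤ, lucas r = 18 ∧ r < m ∧ 2 ^ (1 + 2) ∣ (m : ℤ) - r := by
      rcases (by omega : m % 8 = 6 ∨ m % 8 = 2) with h8 | h8
      · exact ⟨6, by decide, by omega, by norm_num; omega⟩
      · exact ⟨-6, by decide, by omega, by norm_num; omega⟩
    obtain ⟨k, h3, h4, hdvd⟩ := exists_lucas_dvd_add_of_two_pow_dvd_sub (u := lucas)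
      lucas_dvd_lucas_add_two_mul_add hrm h8
    have hk : Even k := even_iff_two_dvd.2 ((dvd_pow_self 2 two_ne_zero).trans h4)
    have h3k : IsCoprime 3 (lucas k) :=
      Int.prime_three.coprime_iff_not_dvd.2 (lucas_not_three_dvd h4)
    rw [h, hr, show 2 * b ^ 2 + 18 = 2 * (b ^ 2 + 3 ^ 2) by ring] at hdvd
    exact lucas_not_dvd_mul_sq_add_sq hk h3 (two_isCoprime_lucas hk h3) h3k hdvd

theorem fib_mul_lucas_ne_five_mul_sq {m : ℕ} (hm : 3 ∣ m) (hm0 : m ≠ 0) (x : ℤ) :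
    Int.fib m * lucas m ≠ 5 * x ^ 2 := by
  intro hprod
  obtain ⟨f, hf⟩ : (2 : ℤ) ∣ Int.fib m := by
    rw [Int.fib_natCast]
    exact_mod_cast Nat.fib_dvd 3 m hm
  set l := Int.fib (m + 1) - f with hl_def
  have hl : lucas m = 2 * l := by rw [lucas_eq_two_mul_fib_add_one_sub_fib, hf]; ring
  rw [hf, hl] at hprod
  obtain ⟨y, rfl⟩ : 2 ∣ x :=
    Int.prime_two.dvd_of_dvd_pow (n := 2) ⟨2 * f * l - 2 * x ^ 2, by linear_combination -hprod⟩
  have hfl : f * l = 5 * y ^ 2 :=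
    mul_left_cancel₀ (four_ne_zero : (4 : ℤ) ≠ 0) (by linear_combination hprod)
  have hcop : IsCoprime f l := by
    have h := Nat.isCoprime_iff_coprime.2 (Nat.fib_coprime_fib_succ m)
    rw [← Int.fib_natCast, ← Int.fib_natCast, Nat.cast_succ, hf] at h
    simpa [hl_def, sub_eq_add_neg] using h.of_mul_left_right.add_mul_left_right (-1)
  have hf0 : 0 ≤ f := by
    have : (0 : ℤ) ≤ Int.fib m := by rw [Int.fib_natCast]; positivity
    omega
  have hl0 : 0 ≤ l := by have := lucas_natCast_pos m; omega
  have h5 : ¬ ((5 : ℕ) : ℤ) ∣ l :=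
    fun h5 => lucas_not_five_dvd m (hl ▸ dvd_mul_of_dvd_right h5 2)
  obtain ⟨-, b, hb⟩ := Int.exists_eq_mul_sq_and_eq_sq Nat.prime_five hf0 hl0 hcop h5 hfl
  rcases eq_zero_or_eq_six_of_lucas_eq_two_mul_sq (b := b) (by rw [hl, hb]) with rfl | rfl
  · exact hm0 rfl
  · have : (5 : ℤ) ∣ 144 := ⟨(2 * y) ^ 2, by rw [← hprod, ← hf, ← hl]; decide⟩
    norm_num at this

theorem eq_five_of_odd_of_fib_eq_five_mul_sq {n x : ℕ} (hn : Odd n) (h : Nat.fib n = 5 * x ^ 2) :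
    n = 5 := by
  by_contra hn5
  have hn1 : n ≠ 1 := by rintro rfl; rw [Nat.fib_one] at h; omega
  obtain ⟨r, hr, hrn, h4⟩ :
      ∃ r : ℤ, Int.fib r = 5 ∧ r < n ∧ 2 ^ (0 + 2) ∣ (n : ℤ) - r := by
    obtain ⟨j, rfl⟩ := hn
    rcases Nat.even_or_odd j with ⟨i, rfl⟩ | ⟨i, rfl⟩
    · exact ⟨5, by decide, by omega, by norm_num; omega⟩
    · exact ⟨-5, by decide, by omega, by norm_num; omega⟩
  obtain ⟨k, h3, h2, hdvd⟩ := exists_lucas_dvd_add_of_two_pow_dvd_sub (u := Int.fib)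
    lucas_dvd_fib_add_two_mul_add hrn h4
  have hk : Even k := even_iff_two_dvd.2 (by simpa using h2)
  have h5k : IsCoprime 5 (lucas k) := by
    have := (Nat.prime_iff_prime_int.1 Nat.prime_five).coprime_iff_not_dvd.2 (lucas_not_five_dvd k)
    exact_mod_cast this
  rw [Int.fib_natCast, h, hr] at hdvd
  push_cast at hdvd
  rw [show 5 * (x : ℤ) ^ 2 + 5 = 5 * (x ^ 2 + 1 ^ 2) by ring] at hdvd
  exact lucas_not_dvd_mul_sq_add_sq hk h3 h5k isCoprime_one_left hdvd

theorem exists_fib_eq_five_mul_sq_of_fib_two_mul {m x : ℕ} (hx : 1 ≤ x)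
    (h : Nat.fib (2 * m) = 5 * x ^ 2) : ∃ a, 1 ≤ a ∧ Nat.fib m = 5 * a ^ 2 := by
  have hm0 : m ≠ 0 := by rintro rfl; simp at h; omega
  have hprod : Int.fib m * lucas m = 5 * (x : ℤ) ^ 2 := by
    rw [← fib_two_mul_eq_fib_mul_lucas, ← Nat.cast_ofNat, ← Nat.cast_mul, Int.fib_natCast, h]
    push_cast; ring
  have h3 : ¬ 3 ∣ m := fun h3 => fib_mul_lucas_ne_five_mul_sq h3 hm0 x hprod
  have hcop : IsCoprime (Int.fib m) (lucas m) := by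
    have hodd : Nat.Coprime (Nat.fib m) 2 := by
      rw [Nat.Coprime, show 2 = Nat.fib 3 from rfl, ← Nat.fib_gcd,
        (Nat.coprime_comm.1 ((Nat.Prime.coprime_iff_not_dvd Nat.prime_three).2 h3))]
      rfl
    have hsucc := Nat.fib_coprime_fib_succ m
    rw [← Nat.isCoprime_iff_coprime] at hodd hsucc
    rw [lucas_eq_two_mul_fib_add_one_sub_fib, sub_eq_add_neg, ← mul_neg_one, Int.fib_natCast,
      show (m : ℤ) + 1 = (m + 1 : ℕ) by push_cast; rfl, Int.fib_natCast]
    exact (hodd.mul_right hsucc).add_mul_left_right (-1)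
  obtain ⟨⟨a, ha⟩, -⟩ := Int.exists_eq_mul_sq_and_eq_sq Nat.prime_five
    (by rw [Int.fib_natCast]; positivity) (lucas_natCast_pos m).le hcop
    (by exact_mod_cast lucas_not_five_dvd m) (y := x) (by exact_mod_cast hprod)
  push_cast [Int.fib_natCast] at ha
  refine ⟨a.natAbs, Int.natAbs_pos.2 ?_, ?_⟩
  · rintro rfl
    have : 0 < Nat.fib m := Nat.fib_pos.2 (Nat.pos_of_ne_zero hm0)
    omega
  · have : (Nat.fib m : ℤ) = 5 * (a.natAbs : ℤ) ^ 2 := by rw [Int.natAbs_sq, ha]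
    exact_mod_cast this

theorem stmt7 (n x : ℕ) (hx : 1 ≤ x) (h : Nat.fib n = 5 * x ^ 2) : n = 5 ∧ x = 1 := by
  induction n using Nat.strong_induction_on generalizing x with
  | _ n ih =>
  obtain ⟨m, rfl | rfl⟩ := Nat.even_or_odd' n
  · obtain ⟨a, ha, hfa⟩ := exists_fib_eq_five_mul_sq_of_fib_two_mul hx h
    have hm0 : m ≠ 0 := by rintro rfl; simp at hfa; omega
    obtain ⟨rfl, -⟩ := ih m (by omega) a ha hfa
    have h11 : x ^ 2 = 11 := by rw [show Nat.fib (2 * 5) = 55 by rfl] at h; omega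
    have : x ≤ 3 := by nlinarith
    interval_cases x <;> omega
  · have h5 := eq_five_of_odd_of_fib_eq_five_mul_sq (odd_two_mul_add_one m) h
    obtain rfl : m = 2 := by omega
    refine ⟨h5, ?_⟩
    rw [show Nat.fib (2 * 2 + 1) = 5 by rfl] at h
    nlinarith
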